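/- arXiv:0808.2932 — 2 statements merged into one kernel-verified Lean document; each statement's English description precedes it below -/
import Mathlib

section
/- Let G be an equationally Noetherian group. If Y is a nonempty algebraic subset of G^n, then the Zariski dimension of Y equals the Krull dimension Kdim_G(Γ(Y)) of its coordinate group Γ(Y). -/
/-!
STATEMENT 4 (Proposition): Let `G` be an equationally Noetherian group. If `Y` is a
nonempty algebraic subset of `G^n`, then the Zariski dimension of `Y` equals the Krull
dimension `Kdim_G(Γ(Y))` of its coordinate group `Γ(Y)` (as a `G`-group via the
canonical embedding `G → Γ(Y)`).
-/


/-- `G[X] = G * F(X)`, the coefficient group of equations in `m` variables. -/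
abbrev GX (G : Type*) [Group G] (m : ℕ) := Monoid.Coprod G (FreeGroup (Fin m))

/-- Evaluation of an element of `G[X]` at a tuple `a ∈ G^m`. -/
noncomputable def evalHom {G : Type*} [Group G] {m : ℕ} (a : Fin m → G) : GX G m →* G :=
  Monoid.Coprod.lift (MonoidHom.id G) (FreeGroup.lift a)

/-- The algebraic set defined by a system of equations `S = 1`. -/
def VG {G : Type*} [Group G] {m : ℕ} (S : Set (GX G m)) : Set (Fin m → G) :=
  {a | ∀ s ∈ S, evalHom a s = 1}

/-- A subset of `G^m` is algebraic if it is the solution set of some system. -/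
def AlgebraicSet {G : Type*} [Group G] {m : ℕ} (Y : Set (Fin m → G)) : Prop :=
  ∃ S : Set (GX G m), Y = VG S

/-- The Zariski topology on `G^m`: the algebraic sets form a pre-basis of closed sets. -/
def zariskiTopology (G : Type*) [Group G] (m : ℕ) : TopologicalSpace (Fin m → G) :=
  TopologicalSpace.generateFrom {U | ∃ S : Set (GX G m), U = (VG S)ᶜ}

/-- `I(Y)`, the normal subgroup of `G[X]` of all elements vanishing on `Y`;
for `Y = V(S)` this is the radical `R(S)`. -/
noncomputable def idealOf {G : Type*} [Group G] {m : ℕ} (Y : Set (Fin m → G)) : Subgroup (GX G m) :=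
  ⨅ a ∈ Y, (evalHom a).ker

instance idealOf_normal {G : Type*} [Group G] {m : ℕ} (Y : Set (Fin m → G)) :
    (idealOf Y).Normal := by
  constructor
  intro x hx g
  simp only [idealOf, Subgroup.mem_iInf, MonoidHom.mem_ker] at hx ⊢
  intro a ha
  simp [map_mul, hx a ha]

/-- The coordinate group `Γ(Y) = G[X]/I(Y)` of an algebraic set `Y ⊆ G^m`. -/
abbrev CoordGroup {G : Type*} [Group G] {m : ℕ} (Y : Set (Fin m → G)) :=
  GX G m ⧸ idealOf Y

/-- The canonical embedding `G → Γ(Y)`. -/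
noncomputable def coordEmbed {G : Type*} [Group G] {m : ℕ} (Y : Set (Fin m → G)) :
    G →* CoordGroup Y :=
  (QuotientGroup.mk' (idealOf Y)).comp Monoid.Coprod.inl

/-- A group `G` is equationally Noetherian: every system of equations (in finitely many
variables) is equivalent over `G` to a finite subsystem. -/
def EquationallyNoetherian (G : Type*) [Group G] : Prop :=
  ∀ (m : ℕ) (S : Set (GX G m)), ∃ S₀ : Set (GX G m), S₀ ⊆ S ∧ S₀.Finite ∧ VG S₀ = VG S

/-- The Zariski dimension of a subset `Y ⊆ G^m`: the supremum of lengths `k` of chains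
`Z_0 ⊂ Z_1 ⊂ ... ⊂ Z_k` of distinct irreducible nonempty closed subsets of `Y`. -/
noncomputable def zariskiDim {G : Type*} [Group G] {m : ℕ} (Y : Set (Fin m → G)) : ℕ∞ :=
  ⨆ (k : ℕ) (_ : ∃ Z : Fin (k + 1) → Set (Fin m → G), StrictMono Z ∧
      ∀ i, Z i ⊆ Y ∧ @IsIrreducible _ (zariskiTopology G m) (Z i) ∧
        @IsClosed _ (zariskiTopology G m) (Z i)), (k : ℕ∞)



/-- `H/N` (the quotient of the `G`-group `H`, with distinguished copy of `G` given by
`ι : G →* H`, by the normal subgroup `N`) is `G`-discriminated by `G`: for every finite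
subset there is a `G`-homomorphism to `G` (i.e. one fixing `G` pointwise and killing `N`)
injective on it (modulo `N`). -/
def DiscriminatesQuot {G H : Type*} [Group G] [Group H] (ι : G →* H) (N : Subgroup H) : Prop :=
  ∀ K : Finset H, ∃ φ : H →* G, φ.comp ι = MonoidHom.id G ∧ N ≤ φ.ker ∧
    ∀ x ∈ K, ∀ y ∈ K, φ x = φ y → x⁻¹ * y ∈ N

/-- A prime ideal of the `G`-group `H`: a normal subgroup meeting the distinguished copy
of `G` trivially and such that `H/N` is `G`-discriminated by `G`. -/
def IsPrimeIdeal {G H : Type*} [Group G] [Group H] (ι : G →* H) (N : Subgroup H) : Prop :=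
  N.Normal ∧ (∀ g : G, ι g ∈ N → g = 1) ∧ DiscriminatesQuot ι N

/-- The Krull dimension of the `G`-group `H`: the supremum of lengths of chains of
distinct prime ideals. -/
noncomputable def KdimG {G H : Type*} [Group G] [Group H] (ι : G →* H) : ℕ∞ :=
  ⨆ (k : ℕ) (_ : ∃ p : Fin (k + 1) → Subgroup H, StrictMono p ∧ ∀ i, IsPrimeIdeal ι (p i)),
    (k : ℕ∞)

/-- The projective dimension of the `G`-group `H` (which is `G`-discriminated by `G`):
the supremum of lengths `k` of chains `H = H_0 → H_1 → ... → H_k = G` of proper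
`G`-epimorphisms of `G`-groups `G`-discriminated by `G`; such a chain is encoded by the
strictly increasing chain of kernels `N i ≤ H`, with `H/N k ≅ G` as `G`-groups. -/
noncomputable def pdG {G H : Type*} [Group G] [Group H] (ι : G →* H) : ℕ∞ :=
  ⨆ (k : ℕ) (_ : ∃ N : Fin (k + 1) → Subgroup H, StrictMono N ∧ N 0 = ⊥ ∧
      (∀ i, (N i).Normal ∧ (∀ g : G, ι g ∈ N i → g = 1) ∧ DiscriminatesQuot ι (N i)) ∧
      (∀ h : H, ∃ g : G, (ι g)⁻¹ * h ∈ N (Fin.last k))), (k : ℕ∞)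

/-- `A` discriminates `B`: every finite subset of `B` is mapped injectively into `A`
by some homomorphism. -/
def Discriminates (A : Type*) [Group A] (B : Type*) [Group B] : Prop :=
  ∀ K : Finset B, ∃ φ : B →* A, Set.InjOn φ ↑K

/-- The projective dimension `pd(H)` of a group `H`: the supremum of lengths `k` of chains
`H = H_1 → H_2 → ... → H_{k+1}` of proper epimorphisms in which each `H_i` and `H`
mutually discriminate each other; such a chain is encoded by the strictly increasing
chain of kernels `N i`. -/
noncomputable def projDim (H : Type*) [Group H] : ℕ∞ :=
  ⨆ (k : ℕ) (_ : ∃ (N : Fin (k + 1) → Subgroup H) (hN : ∀ i, (N i).Normal),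
      StrictMono N ∧ N 0 = ⊥ ∧
      ∀ i, @Discriminates H _ (H ⧸ N i) (@QuotientGroup.Quotient.group H _ (N i) (hN i)) ∧
        @Discriminates (H ⧸ N i) (@QuotientGroup.Quotient.group H _ (N i) (hN i)) H _),
    (k : ℕ∞)

section Aux

variable {G : Type} [Group G] {n : ℕ}

lemma evalHom_inl (a : Fin n → G) (g : G) : evalHom a (Monoid.Coprod.inl g) = g := by
  simp [evalHom]

lemma mem_idealOf {Y : Set (Fin n → G)} {f : GX G n} :
    f ∈ idealOf Y ↔ ∀ a ∈ Y, evalHom a f = 1 := by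
  simp [idealOf, Subgroup.mem_iInf, MonoidHom.mem_ker]

lemma VG_anti {S T : Set (GX G n)} (h : S ⊆ T) : VG T ⊆ VG S :=
  fun a ha s hs => ha s (h hs)

lemma subset_idealOf {S : Set (GX G n)} : S ⊆ (idealOf (VG S) : Set (GX G n)) :=
  fun s hs => mem_idealOf.2 fun _ ha => ha s hs

lemma subset_VG_idealOf {Y : Set (Fin n → G)} : Y ⊆ VG (idealOf Y : Set (GX G n)) :=
  fun a ha s hs => mem_idealOf.1 hs a ha

lemma idealOf_anti {Z Y : Set (Fin n → G)} (h : Z ⊆ Y) : idealOf Y ≤ idealOf Z :=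
  fun w hw => mem_idealOf.2 fun a ha => mem_idealOf.1 hw a (h ha)

lemma isClosed_VG (S : Set (GX G n)) : @IsClosed _ (zariskiTopology G n) (VG S) := by
  letI := zariskiTopology G n
  rw [← isOpen_compl_iff]
  exact TopologicalSpace.GenerateOpen.basic _ ⟨S, rfl⟩

/-- For an irreducible closed set `Z` and a finite set of elements not vanishing identically
on `Z`, there is a point of `Z` where none of them vanishes. -/
lemma exists_point_of_irred {Z : Set (Fin n → G)}
    (hirr : @IsIrreducible _ (zariskiTopology G n) Z)
    (F : Finset (GX G n)) (hF : ∀ f ∈ F, f ∉ idealOf Z) :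
    ∃ a ∈ Z, ∀ f ∈ F, evalHom a f ≠ 1 := by
  letI := zariskiTopology G n
  classical
  by_contra h
  push_neg at h
  have hcover : Z ⊆ ⋃₀ ↑(F.image fun f => VG {f}) := by
    intro a ha
    obtain ⟨f, hf, hf1⟩ := h a ha
    refine ⟨VG {f}, Finset.mem_coe.2 (Finset.mem_image_of_mem _ hf), ?_⟩
    intro s hs
    rw [Set.mem_singleton_iff] at hs
    subst hs; exact hf1
  obtain ⟨t, ht, hZt⟩ := (isIrreducible_iff_sUnion_isClosed.1 hirr) _
    (fun z hz => by
      obtain ⟨f, _, rfl⟩ := Finset.mem_image.1 hz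
      exact isClosed_VG _) hcover
  obtain ⟨f, hfF, rfl⟩ := Finset.mem_image.1 ht
  exact hF f hfF (mem_idealOf.2 fun a ha => hZt ha f (Set.mem_singleton f))

/-- Every irreducible closed set is algebraic: `Z = V(I(Z))`. -/
lemma eq_VG_idealOf {Z : Set (Fin n → G)}
    (hirr : @IsIrreducible _ (zariskiTopology G n) Z)
    (hcl : @IsClosed _ (zariskiTopology G n) Z) :
    Z = VG (idealOf Z : Set (GX G n)) := by
  letI := zariskiTopology G n
  classical
  refine Set.Subset.antisymm subset_VG_idealOf ?_
  intro a ha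
  by_contra haZ
  have hbasis := TopologicalSpace.isTopologicalBasis_of_subbasis
      (rfl : zariskiTopology G n = TopologicalSpace.generateFrom _)
  obtain ⟨b, hb, hab, hbZ⟩ := hbasis.exists_subset_of_mem_open haZ hcl.isOpen_compl
  obtain ⟨f, ⟨hffin, hfsub⟩, rfl⟩ := hb
  choose S hS using fun u : f => hfsub u.2
  haveI := hffin.fintype
  have hcover : Z ⊆ ⋃₀ ↑(Finset.univ.image fun u : f => VG (S u)) := by
    intro a' ha'
    have ha'b : a' ∉ ⋂₀ f := fun hmem => hbZ hmem ha'
    rw [Set.mem_sInter] at ha'b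
    push_neg at ha'b
    obtain ⟨u, hu, hau⟩ := ha'b
    refine ⟨VG (S ⟨u, hu⟩), Finset.mem_coe.2 (Finset.mem_image_of_mem _ (Finset.mem_univ _)), ?_⟩
    have hcompl : u = (VG (S ⟨u, hu⟩))ᶜ := hS ⟨u, hu⟩
    by_contra hnot
    exact hau (by rw [hcompl]; exact hnot)
  obtain ⟨t, ht, hZt⟩ := (isIrreducible_iff_sUnion_isClosed.1 hirr) _
    (fun z hz => by
      obtain ⟨u, _, rfl⟩ := Finset.mem_image.1 hz
      exact isClosed_VG _) hcover
  obtain ⟨u, _, rfl⟩ := Finset.mem_image.1 ht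
  have hSI : S u ⊆ (idealOf Z : Set (GX G n)) := fun s hs =>
    mem_idealOf.2 fun a' ha' => hZt ha' s hs
  have haVS : a ∈ VG (S u) := VG_anti hSI ha
  have hau : a ∈ (u : Set (Fin n → G)) := Set.mem_sInter.1 hab _ u.2
  rw [hS u] at hau
  exact hau haVS

/-- The point associated with a `G`-homomorphism `Γ(Y) → G`, and its evaluation law. -/
lemma eval_point {Y : Set (Fin n → G)} (φ : CoordGroup Y →* G)
    (hφ : φ.comp (coordEmbed Y) = MonoidHom.id G) (w : GX G n) :
    evalHom (fun j => φ (QuotientGroup.mk' (idealOf Y) (Monoid.Coprod.inr (FreeGroup.of j)))) w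
      = φ (QuotientGroup.mk' (idealOf Y) w) := by
  have key : evalHom (fun j => φ (QuotientGroup.mk' (idealOf Y) (Monoid.Coprod.inr (FreeGroup.of j))))
      = φ.comp (QuotientGroup.mk' (idealOf Y)) := by
    apply Monoid.Coprod.hom_ext
    · rw [MonoidHom.comp_assoc]
      show (evalHom _).comp Monoid.Coprod.inl = φ.comp (coordEmbed Y)
      rw [hφ]
      exact Monoid.Coprod.lift_comp_inl (MonoidHom.id G) _
    · apply FreeGroup.ext_hom
      intro j
      show evalHom (fun j => φ (QuotientGroup.mk' (idealOf Y) (Monoid.Coprod.inr (FreeGroup.of j))))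
          (Monoid.Coprod.inr (FreeGroup.of j))
        = φ (QuotientGroup.mk' (idealOf Y) (Monoid.Coprod.inr (FreeGroup.of j)))
      show Monoid.Coprod.lift (MonoidHom.id G) (FreeGroup.lift _) (Monoid.Coprod.inr (FreeGroup.of j)) = _
      rw [Monoid.Coprod.lift_apply_inr, FreeGroup.lift_apply_of]
  rw [key]; rfl

/-- Discrimination produces points of `V(q)` avoiding finitely many hypersurfaces. -/
lemma exists_point_of_prime {Y : Set (Fin n → G)} {p : Subgroup (CoordGroup Y)}
    (hd : DiscriminatesQuot (coordEmbed Y) p) (F : Finset (GX G n))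
    (hF : ∀ f ∈ F, QuotientGroup.mk' (idealOf Y) f ∉ p) :
    ∃ a : Fin n → G,
      (∀ s : GX G n, QuotientGroup.mk' (idealOf Y) s ∈ p → evalHom a s = 1) ∧
      (∀ f ∈ F, evalHom a f ≠ 1) := by
  classical
  obtain ⟨φ, hφ1, hφ2, hφ3⟩ :=
    hd (insert (1 : CoordGroup Y) (F.image (QuotientGroup.mk' (idealOf Y))))
  refine ⟨fun j => φ (QuotientGroup.mk' (idealOf Y) (Monoid.Coprod.inr (FreeGroup.of j))), ?_, ?_⟩
  · intro s hs
    rw [eval_point φ hφ1]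
    exact hφ2 hs
  · intro f hf hone
    rw [eval_point φ hφ1] at hone
    have h1 : (1 : CoordGroup Y) ∈ insert (1 : CoordGroup Y) (F.image (QuotientGroup.mk' (idealOf Y))) :=
      Finset.mem_insert_self _ _
    have h2 : QuotientGroup.mk' (idealOf Y) f ∈
        insert (1 : CoordGroup Y) (F.image (QuotientGroup.mk' (idealOf Y))) :=
      Finset.mem_insert_of_mem (Finset.mem_image_of_mem _ hf)
    have := hφ3 (QuotientGroup.mk' (idealOf Y) f) h2 1 h1 (by rw [hone, map_one])
    rw [mul_one] at this
    exact hF f hf ((Subgroup.inv_mem_iff p).1 this)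

lemma mem_VG_comap {Y : Set (Fin n → G)} {p : Subgroup (CoordGroup Y)} {a : Fin n → G}
    (h : ∀ s : GX G n, QuotientGroup.mk' (idealOf Y) s ∈ p → evalHom a s = 1) :
    a ∈ VG ((p.comap (QuotientGroup.mk' (idealOf Y)) : Subgroup (GX G n)) : Set (GX G n)) :=
  fun s hs => h s hs

/-- Auxiliary: produce a finite avoidance set for a basic open neighborhood. -/
lemma subbasis_finset {Y : Set (Fin n → G)} {p : Subgroup (CoordGroup Y)}
    {f : Set (Set (Fin n → G))} (hfin : f.Finite)
    (hsub : f ⊆ {U | ∃ S : Set (GX G n), U = (VG S)ᶜ})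
    {a₁ : Fin n → G} (ha₁ : a₁ ∈ ⋂₀ f)
    (ha₁W : ∀ s : GX G n, QuotientGroup.mk' (idealOf Y) s ∈ p → evalHom a₁ s = 1) :
    ∃ F : Finset (GX G n), (∀ g ∈ F, QuotientGroup.mk' (idealOf Y) g ∉ p) ∧
      ∀ a : Fin n → G, (∀ g ∈ F, evalHom a g ≠ 1) → a ∈ ⋂₀ f := by
  classical
  have h : ∀ u : f, ∃ w : GX G n, (QuotientGroup.mk' (idealOf Y) w ∉ p) ∧
      ∀ a : Fin n → G, evalHom a w ≠ 1 → a ∈ (u : Set (Fin n → G)) := by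
    rintro ⟨u, hu⟩
    obtain ⟨S, rfl⟩ := hsub hu
    have ha₁u : a₁ ∈ (VG S)ᶜ := ha₁ _ hu
    have : ¬ ∀ s ∈ S, evalHom a₁ s = 1 := ha₁u
    push_neg at this
    obtain ⟨s, hsS, hs1⟩ := this
    exact ⟨s, fun hmem => hs1 (ha₁W s hmem), fun a hne ha => hne (ha s hsS)⟩
  choose w hw1 hw2 using h
  haveI := hfin.fintype
  refine ⟨Finset.univ.image w, ?_, ?_⟩
  · intro g hg
    obtain ⟨u, _, rfl⟩ := Finset.mem_image.1 hg
    exact hw1 u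
  · intro a ha u hu
    exact hw2 ⟨u, hu⟩ a (ha _ (Finset.mem_image_of_mem w (Finset.mem_univ _)))

/-- The algebraic set of a prime ideal is irreducible. -/
lemma isIrreducible_VG_prime {Y : Set (Fin n → G)} {p : Subgroup (CoordGroup Y)}
    (hd : DiscriminatesQuot (coordEmbed Y) p) :
    @IsIrreducible _ (zariskiTopology G n)
      (VG ((p.comap (QuotientGroup.mk' (idealOf Y)) : Subgroup (GX G n)) : Set (GX G n))) := by
  letI := zariskiTopology G n
  classical
  constructor
  · obtain ⟨a, h1, _⟩ := exists_point_of_prime hd ∅ (by simp)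
    exact ⟨a, mem_VG_comap h1⟩
  · rintro u v hu hv ⟨a₁, ha₁W, ha₁u⟩ ⟨a₂, ha₂W, ha₂v⟩
    have hbasis := TopologicalSpace.isTopologicalBasis_of_subbasis
        (rfl : zariskiTopology G n = TopologicalSpace.generateFrom _)
    obtain ⟨b₁, hb₁, hab₁, hb₁u⟩ := hbasis.exists_subset_of_mem_open ha₁u hu
    obtain ⟨f₁, ⟨hf₁fin, hf₁sub⟩, rfl⟩ := hb₁
    obtain ⟨b₂, hb₂, hab₂, hb₂v⟩ := hbasis.exists_subset_of_mem_open ha₂v hv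
    obtain ⟨f₂, ⟨hf₂fin, hf₂sub⟩, rfl⟩ := hb₂
    have hW₁ : ∀ s : GX G n, QuotientGroup.mk' (idealOf Y) s ∈ p → evalHom a₁ s = 1 :=
      fun s hs => ha₁W s hs
    have hW₂ : ∀ s : GX G n, QuotientGroup.mk' (idealOf Y) s ∈ p → evalHom a₂ s = 1 :=
      fun s hs => ha₂W s hs
    obtain ⟨F₁, hF₁p, hF₁⟩ := subbasis_finset hf₁fin hf₁sub hab₁ hW₁
    obtain ⟨F₂, hF₂p, hF₂⟩ := subbasis_finset hf₂fin hf₂sub hab₂ hW₂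
    obtain ⟨a, h1, h2⟩ := exists_point_of_prime hd (F₁ ∪ F₂)
      (fun g hg => (Finset.mem_union.1 hg).elim (hF₁p g) (hF₂p g))
    refine ⟨a, mem_VG_comap h1, ?_, ?_⟩
    · exact hb₁u (hF₁ a fun g hg => h2 g (Finset.mem_union_left _ hg))
    · exact hb₂v (hF₂ a fun g hg => h2 g (Finset.mem_union_right _ hg))

/-- Nullstellensatz for prime ideals: `I(V(q)) = q`. -/
lemma idealOf_VG_prime {Y : Set (Fin n → G)} {p : Subgroup (CoordGroup Y)}
    (hd : DiscriminatesQuot (coordEmbed Y) p) :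
    idealOf (VG ((p.comap (QuotientGroup.mk' (idealOf Y)) : Subgroup (GX G n)) : Set (GX G n)))
      = p.comap (QuotientGroup.mk' (idealOf Y)) := by
  apply le_antisymm
  · intro w hw
    by_contra hwq
    obtain ⟨a, h1, h2⟩ := exists_point_of_prime hd {w}
      (by
        intro g hg
        rw [Finset.mem_singleton] at hg
        subst hg
        exact fun hmem => hwq (Subgroup.mem_comap.2 hmem))
    exact h2 w (Finset.mem_singleton_self w) (mem_idealOf.1 hw a (mem_VG_comap h1))
  · intro s hs
    exact mem_idealOf.2 fun a ha => ha s hs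

end Aux

section Chains

variable {G : Type} [Group G] {n : ℕ}

lemma chain_forward {Y : Set (Fin n → G)} {k : ℕ}
    (h : ∃ Z : Fin (k + 1) → Set (Fin n → G), StrictMono Z ∧
      ∀ i, Z i ⊆ Y ∧ @IsIrreducible _ (zariskiTopology G n) (Z i) ∧
        @IsClosed _ (zariskiTopology G n) (Z i)) :
    ∃ p : Fin (k + 1) → Subgroup (CoordGroup Y), StrictMono p ∧
      ∀ i, IsPrimeIdeal (coordEmbed Y) (p i) := by
  classical
  obtain ⟨Z, hZmono, hZ⟩ := h
  have hIY : ∀ i, idealOf Y ≤ idealOf (Z i) := fun i => idealOf_anti (hZ i).1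
  have hkerle : ∀ i, (QuotientGroup.mk' (idealOf Y)).ker ≤ idealOf (Z i) := fun i => by
    rw [QuotientGroup.ker_mk']; exact hIY i
  refine ⟨fun i => (idealOf (Z i.rev)).map (QuotientGroup.mk' (idealOf Y)), ?_, ?_⟩
  · intro i j hij
    have hrev : j.rev < i.rev := Fin.rev_lt_rev.2 hij
    have hlt : Z j.rev ⊂ Z i.rev := hZmono hrev
    have hqle : idealOf (Z i.rev) ≤ idealOf (Z j.rev) := idealOf_anti hlt.le
    have hqne : idealOf (Z i.rev) ≠ idealOf (Z j.rev) := by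
      intro heq
      have : Z i.rev = Z j.rev := by
        rw [eq_VG_idealOf (hZ i.rev).2.1 (hZ i.rev).2.2,
            eq_VG_idealOf (hZ j.rev).2.1 (hZ j.rev).2.2, heq]
      exact (hZmono hrev).ne' this
    refine lt_of_le_of_ne (Subgroup.map_mono hqle) ?_
    intro heq
    apply hqne
    have h1 := congrArg (Subgroup.comap (QuotientGroup.mk' (idealOf Y))) heq
    rwa [Subgroup.comap_map_eq_self (hkerle i.rev),
         Subgroup.comap_map_eq_self (hkerle j.rev)] at h1
  · intro i
    obtain ⟨hsub, hirr, hcl⟩ := hZ i.rev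
    refine ⟨(idealOf_normal (Z i.rev)).map _ (QuotientGroup.mk'_surjective _), ?_, ?_⟩
    · intro g hg
      have h1 : Monoid.Coprod.inl g ∈ Subgroup.comap (QuotientGroup.mk' (idealOf Y))
          ((idealOf (Z i.rev)).map (QuotientGroup.mk' (idealOf Y))) :=
        Subgroup.mem_comap.2 hg
      rw [Subgroup.comap_map_eq_self (hkerle i.rev)] at h1
      obtain ⟨a, ha⟩ := hirr.1
      have := mem_idealOf.1 h1 a ha
      rwa [evalHom_inl] at this
    · intro K
      set F : Finset (GX G n) :=
        ((K ×ˢ K).filter fun z => z.1⁻¹ * z.2 ∉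
          (idealOf (Z i.rev)).map (QuotientGroup.mk' (idealOf Y))).image
          (fun z => (z.1⁻¹ * z.2).out) with hFdef
      have hF : ∀ w ∈ F, w ∉ idealOf (Z i.rev) := by
        intro w hw
        obtain ⟨z, hz, rfl⟩ := Finset.mem_image.1 hw
        have hznot := (Finset.mem_filter.1 hz).2
        intro hmem
        apply hznot
        refine Subgroup.mem_map.2 ⟨_, hmem, ?_⟩
        rw [QuotientGroup.mk'_apply]
        exact QuotientGroup.out_eq' _
      obtain ⟨a, haZ, haF⟩ := exists_point_of_irred hirr F hF
      have hker : idealOf Y ≤ (evalHom a).ker := fun w hw =>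
        mem_idealOf.1 hw a (hsub haZ)
      refine ⟨QuotientGroup.lift (idealOf Y) (evalHom a) hker, ?_, ?_, ?_⟩
      · ext g
        show QuotientGroup.lift (idealOf Y) (evalHom a) hker
          ((QuotientGroup.mk' (idealOf Y)) (Monoid.Coprod.inl g)) = g
        rw [QuotientGroup.mk'_apply, QuotientGroup.lift_mk', evalHom_inl]
      · intro x hx
        obtain ⟨w, hw, rfl⟩ := Subgroup.mem_map.1 hx
        rw [MonoidHom.mem_ker, QuotientGroup.mk'_apply, QuotientGroup.lift_mk']
        exact mem_idealOf.1 hw a haZ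
      · intro x hx y hy hxy
        by_contra hnot
        have hzmem : (x, y) ∈ (K ×ˢ K).filter fun z => z.1⁻¹ * z.2 ∉
            (idealOf (Z i.rev)).map (QuotientGroup.mk' (idealOf Y)) :=
          Finset.mem_filter.2 ⟨Finset.mem_product.2 ⟨hx, hy⟩, hnot⟩
        have hmemF : (x⁻¹ * y).out ∈ F := Finset.mem_image_of_mem _ hzmem
        apply haF _ hmemF
        have : QuotientGroup.lift (idealOf Y) (evalHom a) hker
            (QuotientGroup.mk ((x⁻¹ * y).out)) = evalHom a ((x⁻¹ * y).out) :=
          rfl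
        rw [← this, QuotientGroup.out_eq', map_mul, map_inv, hxy, inv_mul_cancel]

lemma chain_backward {Y : Set (Fin n → G)} (halg : AlgebraicSet Y) {k : ℕ}
    (h : ∃ p : Fin (k + 1) → Subgroup (CoordGroup Y), StrictMono p ∧
      ∀ i, IsPrimeIdeal (coordEmbed Y) (p i)) :
    ∃ Z : Fin (k + 1) → Set (Fin n → G), StrictMono Z ∧
      ∀ i, Z i ⊆ Y ∧ @IsIrreducible _ (zariskiTopology G n) (Z i) ∧
        @IsClosed _ (zariskiTopology G n) (Z i) := by
  obtain ⟨p, hpmono, hp⟩ := h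
  set q : Fin (k + 1) → Subgroup (GX G n) :=
    fun i => (p i).comap (QuotientGroup.mk' (idealOf Y)) with hqdef
  have hIq : ∀ i, idealOf (VG ((q i : Subgroup (GX G n)) : Set (GX G n))) = q i :=
    fun i => idealOf_VG_prime (hp i).2.2
  have hqmono : StrictMono q := by
    intro i j hij
    refine lt_of_le_of_ne (Subgroup.comap_mono (hpmono hij).le) ?_
    intro heq
    have h1 := congrArg (Subgroup.map (QuotientGroup.mk' (idealOf Y))) heq
    rw [Subgroup.map_comap_eq_self_of_surjective (QuotientGroup.mk'_surjective _),
        Subgroup.map_comap_eq_self_of_surjective (QuotientGroup.mk'_surjective _)] at h1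
    exact (hpmono hij).ne h1
  refine ⟨fun i => VG ((q i.rev : Subgroup (GX G n)) : Set (GX G n)), ?_, ?_⟩
  · intro i j hij
    have hrev : j.rev < i.rev := Fin.rev_lt_rev.2 hij
    have hlt := hqmono hrev
    refine lt_of_le_of_ne (VG_anti hlt.le) ?_
    intro heq
    have heq' : VG ((q i.rev : Subgroup (GX G n)) : Set (GX G n))
        = VG ((q j.rev : Subgroup (GX G n)) : Set (GX G n)) := heq
    apply hlt.ne
    rw [← hIq j.rev, ← hIq i.rev, heq']
  · intro i
    refine ⟨?_, isIrreducible_VG_prime (hp i.rev).2.2, isClosed_VG _⟩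
    obtain ⟨S, rfl⟩ := halg
    refine (VG_anti ?_).trans (le_refl (VG S))
    intro s hs
    have h1 : s ∈ idealOf (VG S) := subset_idealOf hs
    have h2 : QuotientGroup.mk' (idealOf (VG S)) s = 1 := by
      rw [QuotientGroup.mk'_apply, QuotientGroup.eq_one_iff]
      exact h1
    show s ∈ q i.rev
    rw [hqdef]
    exact Subgroup.mem_comap.2 (by rw [h2]; exact (p i.rev).one_mem')
end Chains

theorem stmt4 {G : Type} [Group G] (hG : EquationallyNoetherian G) (n : ℕ)
    (Y : Set (Fin n → G)) (halg : AlgebraicSet Y) (hne : Y.Nonempty) :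
    zariskiDim Y = KdimG (coordEmbed Y) := by
  unfold zariskiDim KdimG
  refine iSup_congr fun k => ?_
  have hiff : (∃ Z : Fin (k + 1) → Set (Fin n → G), StrictMono Z ∧
      ∀ i, Z i ⊆ Y ∧ @IsIrreducible _ (zariskiTopology G n) (Z i) ∧
        @IsClosed _ (zariskiTopology G n) (Z i)) ↔
      (∃ p : Fin (k + 1) → Subgroup (CoordGroup Y), StrictMono p ∧
        ∀ i, IsPrimeIdeal (coordEmbed Y) (p i)) :=
    ⟨chain_forward, chain_backward halg⟩
  rw [hiff]
end

section
/- Let G be a group generated by finitely many elements g_1, ..., g_m, let C be an abelian normal subgroup of G with B = G/C nontrivial, and suppose the group ring ZB is an Ore domain and C, viewed as a ZB-module, has no torsion. If λ: G → [[B, 0], [D, 1]] is a splitting of G over C, then the ZB-module D has no ZB-torsion and rank(D) = rank(C) + 1 ≤ m. -/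
/-!
STATEMENT 9 (Lemma 3, part 1): Let `G` be generated by `g_1, ..., g_m`, `C` an abelian
normal subgroup with `B = G/C` nontrivial; suppose `ℤB` is an Ore domain and `C` (as a
`ℤB`-module via conjugation) has no torsion. If `λ : G → [[B,0],[D,1]]` is a splitting
of `G` over `C`, then `D` has no `ℤB`-torsion and `rank D = rank C + 1 ≤ m`. Here
`rank C` is the rank of `ker σ`, which is `d(C) ≅ C`; the rank of a module over a ring
`R` is `Module.rank`, the supremum of cardinalities of `R`-linearly independent sets.
-/

/-- The elements of the abelian normal subgroup `C` are torsion-free under the natural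
right `ℤ[G/C]`-module structure given by conjugation, expressed elementwise: a nonzero
group-ring element (representatives `h j` of pairwise distinct cosets mod `C`, integer
coefficients `m j`, not all zero) applied to `c ∈ C` is trivial only if `c` is. -/
def ConjTorsionFree {G : Type*} [Group G] (C : Subgroup G) : Prop :=
  ∀ c ∈ C, ∀ (k : ℕ) (h : Fin k → G) (m : Fin k → ℤ),
    (∀ j l : Fin k, j ≠ l → (h j)⁻¹ * h l ∉ C) → (∃ j, m j ≠ 0) →
    (List.ofFn fun j => ((h j)⁻¹ * c * h j) ^ m j).prod = 1 → c = 1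

/-- `(d, σ)` is a matrix splitting of `G` over `C` with `B = G/C`: the right
`ℤB`-module `D` (a left module over `(ℤB)ᵐᵒᵖ`) together with the injective homomorphism
`λ : g ↦ [[ḡ, 0], [d g, 1]]` into the matrix group `[[B, 0], [D, 1]]`. Injectivity of
`λ` is injectivity of `g ↦ (ḡ, d g)`, and `λ` being a homomorphism is the cocycle
identity `d (g h) = d g • h̄ + d h`. Moreover (1) `D` is generated by the `d g`;
(2) `σ` is a module epimorphism of `D` onto the fundamental (augmentation) ideal
`(B−1)·ℤB = {x | Σ coefficients of x = 0}` with `σ (d g) = ḡ − 1`; (3) `ker σ = d(C)`. -/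
def IsMatrixSplitting {G : Type*} [Group G] (C : Subgroup G) [C.Normal]
    {D : Type*} [AddCommGroup D] [Module (MonoidAlgebra ℤ (G ⧸ C))ᵐᵒᵖ D]
    (d : G → D)
    (σ : D →ₗ[(MonoidAlgebra ℤ (G ⧸ C))ᵐᵒᵖ] MonoidAlgebra ℤ (G ⧸ C)) : Prop :=
  Function.Injective (fun g : G => ((g : G ⧸ C), d g)) ∧
  (∀ g h : G, d (g * h) =
    MulOpposite.op (MonoidAlgebra.of ℤ (G ⧸ C) ((h : G ⧸ C))) • d g + d h) ∧
  Submodule.span (MonoidAlgebra ℤ (G ⧸ C))ᵐᵒᵖ (Set.range d) = ⊤ ∧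
  (∀ g : G, σ (d g) = MonoidAlgebra.of ℤ (G ⧸ C) ((g : G ⧸ C)) - 1) ∧
  Set.range σ = {x : MonoidAlgebra ℤ (G ⧸ C) | (x.coeff.sum fun _ n => n) = 0} ∧
  (∀ x : D, σ x = 0 ↔ x ∈ d '' (C : Set G))

/-- A bundled matrix splitting of `G` over `C`. -/
structure MatrixSplitting (G : Type*) [Group G] (C : Subgroup G) [C.Normal] where
  D : Type
  [instAdd : AddCommGroup D]
  [instMod : Module (MonoidAlgebra ℤ (G ⧸ C))ᵐᵒᵖ D]
  d : G → D
  σ : D →ₗ[(MonoidAlgebra ℤ (G ⧸ C))ᵐᵒᵖ] MonoidAlgebra ℤ (G ⧸ C)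
  isSplitting : IsMatrixSplitting C d σ

/-- `R` is a (two-sided) Ore domain: a domain satisfying the right and left Ore
conditions. -/
def IsOreDomain (R : Type*) [Ring R] : Prop :=
  (∀ a b : R, a * b = 0 → a = 0 ∨ b = 0) ∧
  (∀ a b : R, a ≠ 0 → b ≠ 0 → ∃ x y : R, a * x = b * y ∧ a * x ≠ 0) ∧
  (∀ a b : R, a ≠ 0 → b ≠ 0 → ∃ x y : R, x * a = y * b ∧ x * a ≠ 0)

/-!
A torsion element of `D` lies in `ker σ = d(C)`, since `ℤB` is a domain; and for `c ∈ C` the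
action of `u = Σ mⱼ h̄ⱼ ∈ ℤB` on `d c` is `d` of `∏ (hⱼ⁻¹ c hⱼ)^mⱼ`, so torsion in `D` is
torsion of `C` under conjugation.

For the ranks, `σ(D)` is a nonzero right ideal of the Ore domain `ℤB`: any two of its elements
have a common nonzero right multiple, while it has no torsion. The first fact bounds
`rank D ≤ rank (ker σ) + 1`: fixing `e` with `σ e ≠ 0`, every `x` has a nonzero multiple `x u`
congruent to a multiple of `e` modulo `ker σ`. The second gives the reverse inequality. Applied to
the first-coordinate map `Rⁿ⁺¹ → R`, the same bound shows `rank Rⁿ ≤ n`, so Ore domains satisfy the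
strong rank condition, and `D`, generated by the `d gᵢ`, has rank at most `m`.
-/

open Cardinal Module Submodule OreLocalization nonZeroDivisors MulOpposite

section Rank

variable {R M N ι : Type*} [Ring R] [AddCommGroup M] [Module R M] [AddCommGroup N] [Module R N]

theorem LinearIndependent.smul_sub_smul [NoZeroDivisors R] {v : ι → M}
    (hv : LinearIndependent R v) {e : M} (he : Disjoint (span R (Set.range v)) (R ∙ e))
    {u : ι → R} (hu : ∀ i, u i ≠ 0) (c : ι → R) :
    LinearIndependent R fun i => u i • v i - c i • e := by
  rw [linearIndependent_iff'] at hv ⊢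
  intro t w hw i hi
  have hsum : ∑ j ∈ t, (w j * u j) • v j = (∑ j ∈ t, w j * c j) • e := by
    simpa only [smul_sub, mul_smul, Finset.sum_sub_distrib, Finset.sum_smul, sub_eq_zero]
      using hw
  have hzero : ∑ j ∈ t, (w j * u j) • v j = 0 :=
    disjoint_def.mp he _ (sum_mem fun j _ => smul_mem _ _ (subset_span ⟨j, rfl⟩))
      (hsum ▸ smul_mem _ _ (mem_span_singleton_self e))
  exact (mul_eq_zero.mp (hv t _ hzero i hi)).resolve_right (hu i)

theorem rank_ker_add_one_le [Nontrivial R] (f : M →ₗ[R] N) {x : M}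
    (hx : ∀ r : R, r • f x = 0 → r = 0) :
    Module.rank R (LinearMap.ker f) + 1 ≤ Module.rank R M := by
  have hquot : 1 ≤ Module.rank R (M ⧸ LinearMap.ker f) := by
    simpa using (LinearIndependent.of_subsingleton' (v := fun _ : Unit => (LinearMap.ker f).mkQ x)
      () fun r hr => hx r <| by simpa using (Quotient.mk_eq_zero _).mp hr).cardinal_lift_le_rank
  calc Module.rank R (LinearMap.ker f) + 1
      ≤ Module.rank R (M ⧸ LinearMap.ker f) + Module.rank R (LinearMap.ker f) := by
        rw [add_comm]; gcongr
    _ ≤ Module.rank R M := rank_quotient_add_rank_le _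

theorem rank_le_rank_ker_add_one [Nontrivial R] [NoZeroDivisors R] (f : M →ₗ[R] N)
    (hf : ∀ x y : M, f y ≠ 0 → ∃ u v : R, u ≠ 0 ∧ u • f x = v • f y) :
    Module.rank R M ≤ Module.rank R (LinearMap.ker f) + 1 := by
  rw [Module.rank_def]
  refine ciSup_le' fun ⟨s, hs⟩ => ?_
  by_cases hker : ∀ x ∈ s, f x = 0
  · have hs' : LinearIndependent R fun x : s => (⟨x, hker x x.2⟩ : LinearMap.ker f) :=
      .of_comp (LinearMap.ker f).subtype hs
    exact hs'.cardinal_le_rank.trans (self_le_add_right _ _)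
  push Not at hker
  obtain ⟨e, hes, he⟩ := hker
  choose u v hu huv using fun x => hf x e he
  have hdisj : Disjoint (span R (Set.range ((↑) : ↥(s \ {e}) → M))) (R ∙ e) := by
    rw [Subtype.range_coe]
    refine ((linearIndepOn_id_union_iff Set.disjoint_sdiff_left).mp ?_).2.2
    rwa [Set.sdiff_union_of_subset (Set.singleton_subset_iff.mpr hes)]
  have hT : LinearIndependent R fun x : ↥(s \ {e}) =>
      (⟨u x • x - v x • e, by simp [huv]⟩ : LinearMap.ker f) :=
    .of_comp (LinearMap.ker f).subtype <|
      (hs.comp _ (Set.inclusion_injective Set.sdiff_subset)).smul_sub_smul hdisj (fun x => hu x) _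
  calc #s = #↥(s \ {e}) + 1 := by
        rw [← Cardinal.mk_sdiff_add_mk (Set.singleton_subset_iff.mpr hes), Cardinal.mk_singleton]
    _ ≤ Module.rank R (LinearMap.ker f) + 1 := by gcongr; exact hT.cardinal_le_rank

end Rank

section OreDomain

variable {R : Type*} [Ring R] [IsDomain R] [OreSet R⁰]

theorem exists_ne_zero_mul_eq_mul (a : R) {b : R} (hb : b ≠ 0) :
    ∃ u v : R, u ≠ 0 ∧ u * a = v * b :=
  let s : R⁰ := ⟨b, mem_nonZeroDivisors_of_ne_zero hb⟩
  ⟨oreDenom a s, oreNum a s, nonZeroDivisors.ne_zero (oreDenom a s).2, ore_eq a s⟩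

theorem rank_fin_fun_le (n : ℕ) : Module.rank R (Fin n → R) ≤ n := by
  induction n with
  | zero => simp
  | succ n ih =>
    let π : (Fin (n + 1) → R) →ₗ[R] R := LinearMap.proj 0
    have htail : Module.rank R (LinearMap.ker π) ≤ Module.rank R (Fin n → R) := by
      refine LinearMap.rank_le_of_injective
        ((LinearMap.funLeft R R Fin.succ).comp (LinearMap.ker π).subtype) fun x y hxy => ?_
      refine Subtype.ext <| funext fun i => Fin.cases ?_ (fun j => congrFun hxy j) i
      exact (LinearMap.mem_ker.mp x.2).trans (LinearMap.mem_ker.mp y.2).symm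
    calc Module.rank R (Fin (n + 1) → R) ≤ Module.rank R (LinearMap.ker π) + 1 :=
          rank_le_rank_ker_add_one π fun x y hy => exists_ne_zero_mul_eq_mul (x 0) hy
      _ ≤ n + 1 := by gcongr; exact htail.trans ih
      _ = (n + 1 : ℕ) := by push_cast; rfl

instance strongRankCondition_of_oreSet : StrongRankCondition R :=
  (strongRankCondition_iff_forall_rank_lt_aleph0).mpr fun n =>
    (rank_fin_fun_le n).trans_lt (natCast_lt_aleph0)

end OreDomain

theorem IsOreDomain.isDomain {R : Type*} [Ring R] [Nontrivial R] (h : IsOreDomain R) :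
    IsDomain R :=
  have : NoZeroDivisors R := ⟨fun hab => h.1 _ _ hab⟩
  NoZeroDivisors.to_isDomain R

theorem IsOreDomain.nonempty_oreSet_op {R : Type*} [Ring R] [IsDomain R] (h : IsOreDomain R) :
    Nonempty (OreSet (Rᵐᵒᵖ)⁰) := by
  refine nonempty_oreSet_iff_of_noZeroDivisors.mpr fun r s => ?_
  by_cases hr : r = 0
  · exact ⟨0, 1, by simp [hr]⟩
  obtain ⟨x, y, hxy, hne⟩ := h.2.1 r.unop s.1.unop (by simpa using hr)
    (by simp [nonZeroDivisors.ne_zero s.2])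
  have hx : x ≠ 0 := by
    rintro rfl
    simp at hne
  exact ⟨op y, ⟨op x, mem_nonZeroDivisors_of_ne_zero (by simpa using hx)⟩, unop_injective hxy⟩

theorem exists_ne_zero_op_smul_eq_smul {R : Type*} [Ring R] [IsDomain R] [OreSet (Rᵐᵒᵖ)⁰]
    (a : R) {b : R} (hb : b ≠ 0) : ∃ u v : Rᵐᵒᵖ, u ≠ 0 ∧ u • a = v • b := by
  obtain ⟨u, v, hu, huv⟩ := exists_ne_zero_mul_eq_mul (op a) (b := op b) (by simpa using hb)
  exact ⟨u, v, hu, op_injective (by simpa [smul_eq_mul_unop] using huv)⟩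

theorem Subgroup.Normal.forall_mem_ofFn_conj_zpow {G : Type*} [Group G] {C : Subgroup G}
    (hC : C.Normal) {c : G} (hc : c ∈ C) {k : ℕ} (h : Fin k → G) (m : Fin k → ℤ) :
    ∀ x ∈ List.ofFn fun j => ((h j)⁻¹ * c * h j) ^ m j, x ∈ C := by
  simpa [List.mem_ofFn] using fun j => zpow_mem (hC.conj_mem' c hc (h j)) _

theorem MonoidAlgebra.exists_eq_sum_zsmul_of_mk {G : Type*} [Group G] {C : Subgroup G} [C.Normal]
    (u : MonoidAlgebra ℤ (G ⧸ C)) :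
    ∃ (k : ℕ) (h : Fin k → G) (m : Fin k → ℤ), (∀ j l, j ≠ l → (h j)⁻¹ * h l ∉ C) ∧
      u = ∑ j, m j • MonoidAlgebra.of ℤ (G ⧸ C) (h j : G ⧸ C) := by
  classical
  let e := u.coeff.support.equivFin
  refine ⟨_, fun j => (e.symm j : G ⧸ C).out, fun j => u.coeff (e.symm j),
    fun j l hjl hjlC => hjl (e.symm.injective (Subtype.ext ?_)), ?_⟩
  · simpa using QuotientGroup.eq.mpr hjlC
  · simp only [QuotientGroup.out_eq', MonoidAlgebra.of_apply, MonoidAlgebra.smul_single,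
      smul_eq_mul, mul_one]
    rw [e.symm.sum_comp (fun x : u.coeff.support => MonoidAlgebra.single (x : G ⧸ C) (u.coeff x)),
      Finset.sum_coe_sort u.coeff.support (fun x => MonoidAlgebra.single x (u.coeff x))]
    exact (MonoidAlgebra.sum_coeff_single u).symm

section CrossedHom

variable {G : Type*} [Group G] (C : Subgroup G) [C.Normal] {D : Type*} [AddCommGroup D]
  [Module (MonoidAlgebra ℤ (G ⧸ C))ᵐᵒᵖ D]

def IsCrossedHom (d : G → D) : Prop :=
  ∀ g h : G, d (g * h) = op (MonoidAlgebra.of ℤ (G ⧸ C) (h : G ⧸ C)) • d g + d h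

variable {C} {d : G → D}

namespace IsCrossedHom

theorem map_one (hd : IsCrossedHom C d) : d 1 = 0 := by
  simpa [← MonoidAlgebra.one_def] using hd 1 1

theorem map_mul_of_mem (hd : IsCrossedHom C d) (a : G) {c : G} (hc : c ∈ C) :
    d (a * c) = d a + d c := by
  rw [hd, (QuotientGroup.eq_one_iff c).mpr hc, _root_.map_one, op_one, one_smul]

theorem map_inv (hd : IsCrossedHom C d) (g : G) :
    d g⁻¹ = -(op (MonoidAlgebra.of ℤ (G ⧸ C) ((g⁻¹ : G) : G ⧸ C)) • d g) := by
  rw [eq_neg_iff_add_eq_zero, add_comm, ← hd, mul_inv_cancel, hd.map_one]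

theorem map_inv_of_mem (hd : IsCrossedHom C d) {c : G} (hc : c ∈ C) : d c⁻¹ = -d c := by
  rw [hd.map_inv, (QuotientGroup.eq_one_iff _).mpr (inv_mem hc), _root_.map_one, op_one, one_smul]

theorem map_zpow_of_mem (hd : IsCrossedHom C d) {c : G} (hc : c ∈ C) (n : ℤ) :
    d (c ^ n) = n • d c := by
  induction n using Int.induction_on with
  | zero => simp [hd.map_one]
  | succ n ih => rw [zpow_add_one, hd.map_mul_of_mem _ hc, ih, add_smul, one_smul]
  | pred n ih =>
    rw [zpow_sub_one, hd.map_mul_of_mem _ (inv_mem hc), ih, hd.map_inv_of_mem hc, sub_smul,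
      one_smul, sub_eq_add_neg]

theorem map_list_prod (hd : IsCrossedHom C d) {l : List G} (hl : ∀ x ∈ l, x ∈ C) :
    d l.prod = (l.map d).sum := by
  induction l with
  | nil => simpa using hd.map_one
  | cons a l ih =>
    rw [List.forall_mem_cons] at hl
    rw [List.prod_cons, hd.map_mul_of_mem _ (list_prod_mem hl.2), ih hl.2, List.map_cons,
      List.sum_cons]

theorem map_conj (hd : IsCrossedHom C d) {c : G} (hc : c ∈ C) (h : G) :
    d (h⁻¹ * c * h) = op (MonoidAlgebra.of ℤ (G ⧸ C) (h : G ⧸ C)) • d c := by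
  rw [hd, hd.map_mul_of_mem _ hc, smul_add, add_right_comm, ← hd, inv_mul_cancel, hd.map_one,
    zero_add]

theorem map_prod_conj_zpow (hd : IsCrossedHom C d) {c : G} (hc : c ∈ C) {k : ℕ}
    (h : Fin k → G) (m : Fin k → ℤ) :
    d (List.ofFn fun j => ((h j)⁻¹ * c * h j) ^ m j).prod =
      op (∑ j, m j • MonoidAlgebra.of ℤ (G ⧸ C) (h j : G ⧸ C)) • d c := by
  rw [hd.map_list_prod (‹C.Normal›.forall_mem_ofFn_conj_zpow hc h m), List.map_ofFn,
    List.sum_ofFn, Finset.op_sum, Finset.sum_smul]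
  refine Finset.sum_congr rfl fun j _ => ?_
  simp only [Function.comp_apply, hd.map_zpow_of_mem (‹C.Normal›.conj_mem' c hc (h j)),
    hd.map_conj hc, op_smul, smul_assoc]

theorem span_range_comp_eq {ι : Type*} (hd : IsCrossedHom C d) {g : ι → G}
    (hg : Subgroup.closure (Set.range g) = ⊤) :
    Submodule.span (MonoidAlgebra ℤ (G ⧸ C))ᵐᵒᵖ (Set.range fun i => d (g i)) =
      Submodule.span (MonoidAlgebra ℤ (G ⧸ C))ᵐᵒᵖ (Set.range d) := by
  refine le_antisymm (Submodule.span_mono (Set.range_comp_subset_range g d)) ?_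
  rw [Submodule.span_le]
  rintro _ ⟨x, rfl⟩
  induction hg ▸ Subgroup.mem_top x using Subgroup.closure_induction with
  | mem _ hx => obtain ⟨i, rfl⟩ := hx; exact Submodule.subset_span ⟨i, rfl⟩
  | one => simp [hd.map_one]
  | mul a b _ _ ha hb => rw [hd]; exact add_mem (Submodule.smul_mem _ _ ha) hb
  | inv a _ ha => rw [hd.map_inv]; exact neg_mem (Submodule.smul_mem _ _ ha)

end IsCrossedHom

namespace IsMatrixSplitting

variable {σ : D →ₗ[(MonoidAlgebra ℤ (G ⧸ C))ᵐᵒᵖ] MonoidAlgebra ℤ (G ⧸ C)}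

theorem isCrossedHom (hs : IsMatrixSplitting C d σ) : IsCrossedHom C d := hs.2.1

theorem eq_one_of_mem_of_eq_zero (hs : IsMatrixSplitting C d σ) {c : G} (hc : c ∈ C)
    (h0 : d c = 0) : c = 1 :=
  hs.1 (Prod.ext ((QuotientGroup.eq_one_iff c).mpr hc) (h0.trans hs.isCrossedHom.map_one.symm))

theorem eq_zero_or_eq_zero_of_smul_eq_zero (hs : IsMatrixSplitting C d σ)
    (hTF : ConjTorsionFree C) [NoZeroDivisors (MonoidAlgebra ℤ (G ⧸ C))] {x : D}
    {u : MonoidAlgebra ℤ (G ⧸ C)} (hux : op u • x = 0) : x = 0 ∨ u = 0 := by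
  refine or_iff_not_imp_right.mpr fun hu => ?_
  have hσx : σ x = 0 := by
    simpa [hu] using congrArg σ hux
  obtain ⟨c, hc, rfl⟩ := (hs.2.2.2.2.2 x).mp hσx
  obtain ⟨k, h, m, hdistinct, rfl⟩ := u.exists_eq_sum_zsmul_of_mk
  have hm : ∃ j, m j ≠ 0 := by
    by_contra! hm
    simp [hm] at hu
  have hprod := hs.eq_one_of_mem_of_eq_zero
    (list_prod_mem (‹C.Normal›.forall_mem_ofFn_conj_zpow hc h m))
    (by rw [hs.isCrossedHom.map_prod_conj_zpow hc, hux])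
  rw [hTF c hc k h m hdistinct hm hprod, hs.isCrossedHom.map_one]

theorem rank_le_of_closure_eq_top (hs : IsMatrixSplitting C d σ)
    [StrongRankCondition (MonoidAlgebra ℤ (G ⧸ C))ᵐᵒᵖ] {m : ℕ} {g : Fin m → G}
    (hg : Subgroup.closure (Set.range g) = ⊤) :
    Module.rank (MonoidAlgebra ℤ (G ⧸ C))ᵐᵒᵖ D ≤ m := by
  rw [← rank_top, ← hs.2.2.1, ← hs.isCrossedHom.span_range_comp_eq hg]
  refine (rank_span_le _).trans ?_
  simpa using Cardinal.mk_range_le_lift (f := fun i => d (g i))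

theorem apply_ne_zero_of_notMem (hs : IsMatrixSplitting C d σ) {g : G} (hg : g ∉ C) :
    σ (d g) ≠ 0 := by
  rw [hs.2.2.2.1, sub_ne_zero, ← map_one (MonoidAlgebra.of ℤ (G ⧸ C)),
    (MonoidAlgebra.of_injective).ne_iff]
  exact mt (QuotientGroup.eq_one_iff g).mp hg

end IsMatrixSplitting

end CrossedHom

theorem stmt9_general {G : Type} [Group G] (m : ℕ) (g : Fin m → G)
    (hgen : Subgroup.closure (Set.range g) = ⊤)
    (C : Subgroup G) [C.Normal]
    (hC : C ≠ ⊤)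
    (hOre : IsOreDomain (MonoidAlgebra ℤ (G ⧸ C)))
    (hTF : ConjTorsionFree C)
    (D : Type) [AddCommGroup D] [Module (MonoidAlgebra ℤ (G ⧸ C))ᵐᵒᵖ D]
    (d : G → D) (σ : D →ₗ[(MonoidAlgebra ℤ (G ⧸ C))ᵐᵒᵖ] MonoidAlgebra ℤ (G ⧸ C))
    (hsplit : IsMatrixSplitting C d σ) :
    (∀ (x : D) (u : MonoidAlgebra ℤ (G ⧸ C)),
      MulOpposite.op u • x = 0 → x = 0 ∨ u = 0) ∧
    Module.rank (MonoidAlgebra ℤ (G ⧸ C))ᵐᵒᵖ D =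
      Module.rank (MonoidAlgebra ℤ (G ⧸ C))ᵐᵒᵖ (LinearMap.ker σ) + 1 ∧
    Module.rank (MonoidAlgebra ℤ (G ⧸ C))ᵐᵒᵖ D ≤ m := by
  have := hOre.isDomain
  obtain ⟨_⟩ := hOre.nonempty_oreSet_op
  obtain ⟨g₀, hg₀⟩ : ∃ g₀, g₀ ∉ C := by
    by_contra! h
    exact hC ((Subgroup.eq_top_iff' C).mpr h)
  refine ⟨fun x u => hsplit.eq_zero_or_eq_zero_of_smul_eq_zero hTF, le_antisymm ?_ ?_,
    hsplit.rank_le_of_closure_eq_top hgen⟩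
  · exact rank_le_rank_ker_add_one σ fun x y hy => exists_ne_zero_op_smul_eq_smul (σ x) hy
  · exact rank_ker_add_one_le σ fun r hr =>
      (smul_eq_zero.mp hr).resolve_right (hsplit.apply_ne_zero_of_notMem hg₀)

theorem stmt9 {G : Type} [Group G] (m : ℕ) (g : Fin m → G)
    (hgen : Subgroup.closure (Set.range g) = ⊤)
    (C : Subgroup G) [C.Normal] (habel : ∀ x ∈ C, ∀ y ∈ C, x * y = y * x)
    (hC : C ≠ ⊤)
    (hOre : IsOreDomain (MonoidAlgebra ℤ (G ⧸ C)))
    (hTF : ConjTorsionFree C)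
    (D : Type) [AddCommGroup D] [Module (MonoidAlgebra ℤ (G ⧸ C))ᵐᵒᵖ D]
    (d : G → D) (σ : D →ₗ[(MonoidAlgebra ℤ (G ⧸ C))ᵐᵒᵖ] MonoidAlgebra ℤ (G ⧸ C))
    (hsplit : IsMatrixSplitting C d σ) :
    (∀ (x : D) (u : MonoidAlgebra ℤ (G ⧸ C)),
      MulOpposite.op u • x = 0 → x = 0 ∨ u = 0) ∧
    Module.rank (MonoidAlgebra ℤ (G ⧸ C))ᵐᵒᵖ D =
      Module.rank (MonoidAlgebra ℤ (G ⧸ C))ᵐᵒᵖ (LinearMap.ker σ) + 1 ∧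
    Module.rank (MonoidAlgebra ℤ (G ⧸ C))ᵐᵒᵖ D ≤ m :=
  stmt9_general m g hgen C hC hOre hTF D d σ hsplit
end
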